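/- arXiv:0903.2494 — 2 statements merged into one kernel-verified Lean document; each statement's English description precedes it below -/
import Mathlib

section
/- Let p be a prime and let λ be a partition with empty p-core, with β-set X satisfying |X| ≡ 0 (mod p). Then p·(θ(X_γ) + 1/2) = θ(X) + 1/2 for every 0 ≤ γ ≤ p − 1. -/
/-- A partition of a natural number, given as a weakly decreasing,
eventually-zero sequence of parts (0-indexed: `parts i` is the (i+1)-st part). -/
structure NPartition where
  parts : ℕ → ℕ
  antitone : ∀ ⦃i j : ℕ⦄, i ≤ j → parts j ≤ parts i
  finite_support : ∃ N : ℕ, ∀ n : ℕ, N ≤ n → parts n = 0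

/-- The conjugate (dual) partition: `conj j` is the (j+1)-st part of `λ*`,
i.e. the number of indices `i` with `parts i > j`. -/
noncomputable def NPartition.conj (μ : NPartition) (j : ℕ) : ℕ :=
  Nat.card {i : ℕ // j < μ.parts i}

/-- A partition is symmetric if it equals its conjugate. -/
def IsSymmetric (μ : NPartition) : Prop := ∀ j : ℕ, μ.conj j = μ.parts j

/-- `X` is a β-set for `μ`: if `X = {x_1 < … < x_k}` then the parts of `μ`
are `λ_i = x_{k+1−i} − (k − i)` (discarding zero parts); equivalently the
elements of `X` are exactly `parts i + (card X − 1 − i)` for `i < card X`. -/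
def IsBetaSet (X : Finset ℕ) (μ : NPartition) : Prop :=
  ∀ n : ℕ, n ∈ X ↔ ∃ i : ℕ, i < X.card ∧ n + i + 1 = μ.parts i + X.card

/-- A hook of a β-set `X`: a pair `(y, x)` with `y ∉ X`, `x ∈ X`, `y < x`. -/
def IsBetaHook (X : Finset ℕ) (y x : ℕ) : Prop := y ∉ X ∧ x ∈ X ∧ y < x

/-- `θ(X) = t + 1/2`: the number of beads of `X` strictly to the right of `t`
equals the number of spaces (nonnegative integers not in `X`) at positions `≤ t`. -/
def IsTheta (X : Finset ℕ) (t : ℤ) : Prop :=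
  -1 ≤ t ∧ (X.filter (fun x : ℕ => t < (x : ℤ))).card =
    ((Finset.range (t + 1).toNat).filter (fun y => y ∉ X)).card

/-- Removing one hook `(y, x)` from the β-set `X` yields `X'`. -/
def RemoveHook (X X' : Finset ℕ) : Prop :=
  ∃ y x : ℕ, y ∉ X ∧ x ∈ X ∧ y < x ∧ X' = insert y (X.erase x)

/-- Removing one hook of length `p` from the β-set `X` yields `X'`. -/
def RemovePHook (p : ℕ) (X X' : Finset ℕ) : Prop :=
  ∃ y x : ℕ, y ∉ X ∧ x ∈ X ∧ y + p = x ∧ X' = insert y (X.erase x)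

/-- The partition represented by `X` has empty `p`-core: `X` can be reduced by
successive removals of `p`-hooks to the β-set `{0, 1, …, card X − 1}` of `∅`. -/
def HasEmptyPCore (p : ℕ) (X : Finset ℕ) : Prop :=
  Relation.ReflTransGen (RemovePHook p) X (Finset.range X.card)

/-- The induced β-set on runner `γ`: `X_γ = {j : γ + j·p ∈ X}`. -/
def runner (p γ : ℕ) (X : Finset ℕ) : Finset ℕ :=
  (X.filter (fun x => x % p = γ)).image (fun x => x / p)

/-- The set of arm lengths of the diagonal hooks `h_{ii}` of `μ`. -/
def diagArms (μ : NPartition) : Set ℕ :=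
  {a | ∃ d : ℕ, d < μ.parts d ∧ a + d + 1 = μ.parts d}

/-- The set of leg lengths of the diagonal hooks `h_{ii}` of `μ`. -/
def diagLegs (μ : NPartition) : Set ℕ :=
  {l | ∃ d : ℕ, d < μ.parts d ∧ l + d + 1 = μ.conj d}

/-- `δ(μ)`: the set of hook lengths of the diagonal hooks of `μ`. -/
def diagHookLengths (μ : NPartition) : Set ℕ :=
  {e | ∃ d : ℕ, d < μ.parts d ∧ e + 2 * d + 1 = μ.parts d + μ.conj d}

/-- `(x', x)` is a diagonal hook of the β-set `X`: a hook which corresponds to a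
hook `h_{ii}` on the diagonal of the Young diagram under the standard bijection. -/
def IsDiagHook (X : Finset ℕ) (x' x : ℕ) : Prop :=
  IsBetaHook X x' x ∧
  (X.filter (fun z => x ≤ z)).card =
    ((Finset.range (x' + 1)).filter (fun z => z ∉ X)).card

/-- `μ` is concentrated at `{γ, γ*}` (`γ* = p − 1 − γ`): every diagonal hook of `μ`
has arm length congruent to `γ` or `γ*` modulo `p`. -/
def ConcentratedAt (p γ : ℕ) (μ : NPartition) : Prop :=
  ∀ a ∈ diagArms μ, a % p = γ ∨ a % p = p - 1 - γ

/-- `μ` is a `p`-core: no hook of its Young diagram has length `p`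
(the hook at node `(i,j)`, 0-indexed, has length `parts i + conj j − i − j − 1`). -/
def IsPCore (p : ℕ) (μ : NPartition) : Prop :=
  ∀ i j : ℕ, j < μ.parts i → μ.parts i + μ.conj j ≠ p + i + j + 1

/-- `μ` is `γ`-packed: the set of arm lengths of diagonal hooks of `μ` congruent to
`γ` mod `p` is exactly `{γ + i·p : 0 ≤ i ≤ r}` for some `r ≥ 0`. -/
def GammaPacked (p γ : ℕ) (μ : NPartition) : Prop :=
  ∃ r : ℕ, {a | a ∈ diagArms μ ∧ a % p = γ} = {a : ℕ | ∃ i ≤ r, a = γ + i * p}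

/-- The β-set `X` admits no `p`-hook. -/
def NoPHooks (p : ℕ) (X : Finset ℕ) : Prop := ¬ ∃ X' : Finset ℕ, RemovePHook p X X'

/-- `μ0` is the `p`-core of the partition with β-set `X`: it is represented by a
β-set obtained from `X` by repeatedly removing `p`-hooks until none remain. -/
def IsPCoreOf (p : ℕ) (X : Finset ℕ) (μ0 : NPartition) : Prop :=
  ∃ X0 : Finset ℕ, Relation.ReflTransGen (RemovePHook p) X X0 ∧
    NoPHooks p X0 ∧ IsBetaSet X0 μ0
/-
Since the beads of `X` to the right of `t` match the gaps at or left of `t`, `θ(X) + 1/2` is just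
`|X|`, so the claim is `p · |X_γ| = |X|`. Removing a `p`-hook moves one bead along its runner,
so the number of beads on every runner is unchanged; for the empty core `{0, …, pk − 1}` every
runner carries exactly `k` beads.
-/

open Finset

lemma IsTheta.add_one_eq_card {X : Finset ℕ} {t : ℤ} (h : IsTheta X t) : t + 1 = X.card := by
  obtain ⟨ht, hbal⟩ := h
  set n := (t + 1).toNat
  have hn : (n : ℤ) = t + 1 := Int.toNat_of_nonneg (by omega)
  have hright : X.filter (fun x : ℕ => t < (x : ℤ)) = X.filter (fun x => ¬ x < n) :=
    filter_congr fun x _ => by omega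
  have hleft : X.filter (fun x => x < n) = (range n).filter (· ∈ X) := by
    ext x; simp [and_comm]
  have hX := card_filter_add_card_filter_not (s := X) (fun x => x < n)
  have hrange := card_filter_add_card_filter_not (s := range n) (· ∈ X)
  rw [card_range] at hrange
  rw [hright] at hbal
  rw [hleft] at hX
  omega

lemma card_runner (p γ : ℕ) (X : Finset ℕ) :
    (runner p γ X).card = (X.filter (· % p = γ)).card := by
  refine card_image_of_injOn fun x hx y hy hxy => ?_
  simp only [coe_filter, Set.mem_ofPred_eq] at hx hy
  rw [← Nat.div_add_mod x p, ← Nat.div_add_mod y p, hx.2, hy.2]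
  exact congrArg (p * · + γ) hxy

lemma mem_runner {p γ : ℕ} (hγ : γ < p) (X : Finset ℕ) (j : ℕ) :
    j ∈ runner p γ X ↔ p * j + γ ∈ X := by
  have hp : 0 < p := by omega
  simp only [runner, mem_image, mem_filter]
  constructor
  · rintro ⟨x, ⟨hx, rfl⟩, rfl⟩
    rwa [Nat.div_add_mod]
  · intro h
    refine ⟨p * j + γ, ⟨h, ?_⟩, ?_⟩
    · rw [Nat.mul_add_mod, Nat.mod_eq_of_lt hγ]
    · rw [Nat.mul_add_div hp, Nat.div_eq_of_lt hγ, add_zero]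

lemma runner_range_mul {p γ : ℕ} (hγ : γ < p) (k : ℕ) :
    runner p γ (range (p * k)) = range k := by
  ext j
  rw [mem_runner hγ, mem_range, mem_range]
  constructor
  · intro h
    exact Nat.lt_of_mul_lt_mul_left (a := p) (by omega)
  · intro h
    calc p * j + γ < p * (j + 1) := by rw [mul_add_one]; omega
      _ ≤ p * k := Nat.mul_le_mul_left p h

lemma card_filter_insert_erase {α : Type*} [DecidableEq α] {P : α → Prop} [DecidablePred P]
    {X : Finset α} {x y : α} (hy : y ∉ X) (hx : x ∈ X) (hxy : P y ↔ P x) :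
    ((insert y (X.erase x)).filter P).card = (X.filter P).card := by
  rw [filter_insert, filter_erase]
  by_cases hPx : P x
  · have hxP : x ∈ X.filter P := mem_filter.2 ⟨hx, hPx⟩
    have hyP : y ∉ (X.filter P).erase x := fun h => hy (mem_filter.1 (mem_of_mem_erase h)).1
    rw [if_pos (hxy.2 hPx), card_insert_of_notMem hyP, card_erase_of_mem hxP,
      Nat.sub_add_cancel (card_pos.2 ⟨x, hxP⟩)]
  · rw [if_neg (mt hxy.1 hPx), erase_eq_of_notMem (fun h => hPx (mem_filter.1 h).2)]

lemma RemovePHook.card_runner_eq {p γ : ℕ} {X X' : Finset ℕ} (h : RemovePHook p X X') :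
    (runner p γ X').card = (runner p γ X).card := by
  obtain ⟨y, x, hy, hx, rfl, rfl⟩ := h
  rw [card_runner, card_runner, card_filter_insert_erase hy hx (by rw [Nat.add_mod_right])]

lemma card_runner_eq_of_reflTransGen {p γ : ℕ} {X Y : Finset ℕ}
    (h : Relation.ReflTransGen (RemovePHook p) X Y) :
    (runner p γ Y).card = (runner p γ X).card := by
  induction h with
  | refl => rfl
  | tail _ hstep ih => exact hstep.card_runner_eq.trans ih

theorem stmt7_general (p : ℕ) (X : Finset ℕ)
    (hcore : HasEmptyPCore p X) (hcard : X.card % p = 0) :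
    ∀ γ < p, ∀ s t : ℤ, IsTheta (runner p γ X) s → IsTheta X t →
      (p : ℤ) * (s + 1) = t + 1 := by
  intro γ hγ s t hs ht
  obtain ⟨k, hk⟩ := Nat.dvd_of_mod_eq_zero hcard
  have hbeads : (runner p γ X).card = k := by
    rw [← card_runner_eq_of_reflTransGen hcore, hk, runner_range_mul hγ, card_range]
  rw [hs.add_one_eq_card, ht.add_one_eq_card, hbeads, hk]
  push_cast
  ring

/-- if `λ` has empty `p`-core and `|X| ≡ 0 (mod p)`, then
`p·(θ(X_γ) + 1/2) = θ(X) + 1/2` for every runner `γ`. -/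
theorem stmt7 (p : ℕ) (hp : p.Prime) (X : Finset ℕ) (μ : NPartition)
    (hX : IsBetaSet X μ) (hcore : HasEmptyPCore p X) (hcard : X.card % p = 0) :
    ∀ γ < p, ∀ s t : ℤ, IsTheta (runner p γ X) s → IsTheta X t →
      (p : ℤ) * (s + 1) = t + 1 :=
  stmt7_general p X hcore hcard
end

section
/- Let p be a prime and let λ^0 be a symmetric partition that is a p-core. If λ^0 has a diagonal hook whose arm length is congruent to γ modulo p (for some 0 ≤ γ ≤ p − 1), then λ^0 is γ-packed: the set of arm lengths of diagonal hooks of λ^0 that are congruent to γ modulo p equals {γ + ip : 0 ≤ i ≤ r} for some integer r ≥ 0. -/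
/-!
Write `β_i = λ_i - i - 1`. The nonnegative `β_i` are exactly the diagonal arm lengths, and for a
symmetric partition an integer `z` is some `β_i` if and only if `-1 - z` is not. Hence if `x` is a
`β`-number but `x - p` is not, then `p - 1 - x` is one, and `x = β_i`, `p - 1 - x = β_j` exhibit a
hook of length `β_i + β_j + 1 = p` at the node `(i, j)`. So in a symmetric `p`-core the diagonal
arm lengths are closed under subtracting `p`, and those congruent to `γ` form an initial segment of
`γ, γ + p, γ + 2p, …`.
-/

theorem Nat.exists_residue_eq_progression_of_sub_mem {A : Set ℕ} {p γ : ℕ} (hγ : γ < p)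
    (hA : BddAbove A) (hsub : ∀ a ∈ A, p ≤ a → a - p ∈ A) (hne : ∃ a ∈ A, a % p = γ) :
    ∃ r, {a | a ∈ A ∧ a % p = γ} = {a | ∃ i ≤ r, a = γ + i * p} := by
  set I : Set ℕ := {i | γ + i * p ∈ A}
  have hmod : ∀ a, a % p = γ → γ + a / p * p = a := fun a ha => ha ▸ Nat.mod_add_div' a p
  have hpred : ∀ j k, j + k ∈ I → j ∈ I := by
    intro j k
    induction k with
    | zero => exact id
    | succ k ih =>
      intro hk
      have hsucc : γ + (j + (k + 1)) * p = γ + (j + k) * p + p := by ring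
      have := hsub _ hk (hsucc ▸ Nat.le_add_left p _)
      rw [hsucc, Nat.add_sub_cancel] at this
      exact ih this
  have hI : BddAbove I := by
    obtain ⟨B, hB⟩ := hA
    exact ⟨B, fun i hi => (Nat.le_mul_of_pos_right i (by omega)).trans
      ((Nat.le_add_left _ γ).trans (hB hi))⟩
  obtain ⟨a, ha, hamod⟩ := hne
  have hmem : ∀ b ∈ A, b % p = γ → b / p ∈ I := fun b hb hbmod => by
    simp only [I, Set.mem_ofPred_eq, hmod b hbmod, hb]
  have hIne : I.Nonempty := ⟨a / p, hmem a ha hamod⟩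
  refine ⟨sSup I, Set.ext fun b => ⟨?_, ?_⟩⟩
  · rintro ⟨hb, hbmod⟩
    exact ⟨b / p, le_csSup hI (hmem b hb hbmod), (hmod b hbmod).symm⟩
  · rintro ⟨i, hi, rfl⟩
    refine ⟨hpred i (sSup I - i) ?_, by rw [Nat.add_mul_mod_self_right, Nat.mod_eq_of_lt hγ]⟩
    rw [Nat.add_sub_cancel' hi]
    exact Nat.sSup_mem hIne hI

namespace NPartition

variable (μ : NPartition)

def beta (i : ℕ) : ℤ := (μ.parts i : ℤ) - i - 1

def betaSet : Set ℤ := Set.range μ.beta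

theorem beta_antitone : Antitone μ.beta :=
  antitone_nat_of_succ_le fun i => by
    have := μ.antitone (Nat.le_add_right i 1)
    unfold beta; push_cast; omega

theorem neg_sub_one_le_beta (i : ℕ) : -(i : ℤ) - 1 ≤ μ.beta i := by
  unfold beta; omega

theorem exists_beta_le (z : ℤ) : ∃ n, μ.beta n ≤ z := by
  obtain ⟨N, hN⟩ := μ.finite_support
  refine ⟨N + z.natAbs, ?_⟩
  unfold beta
  rw [hN _ (Nat.le_add_right _ _)]
  omega

theorem lt_conj_iff (i j : ℕ) : i < μ.conj j ↔ j < μ.parts i := by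
  obtain ⟨N, hN⟩ := μ.finite_support
  have hex : ∃ n, μ.parts n ≤ j := ⟨N, by rw [hN N le_rfl]; omega⟩
  have hiff : ∀ i, j < μ.parts i ↔ i < Nat.find hex := fun i =>
    ⟨fun h => lt_of_not_ge fun hi => (Nat.find_spec hex).not_gt (h.trans_le (μ.antitone hi)),
      fun h => lt_of_not_ge (Nat.find_min hex h)⟩
  have hconj : μ.conj j = Nat.find hex := by
    rw [conj, Nat.card_congr ((Equiv.subtypeEquivRight hiff).trans Fin.equivSubtype.symm),
      Nat.card_eq_fintype_card, Fintype.card_fin]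
  rw [hconj, hiff]

theorem mem_diagArms_iff (a : ℕ) : a ∈ diagArms μ ↔ (a : ℤ) ∈ μ.betaSet := by
  refine ⟨fun ⟨d, _, hd⟩ => ⟨d, by unfold beta; omega⟩, fun ⟨d, hd⟩ => ?_⟩
  unfold beta at hd
  exact ⟨d, by omega, by omega⟩

theorem lt_parts_zero_of_mem_diagArms {a : ℕ} (ha : a ∈ diagArms μ) : a < μ.parts 0 := by
  obtain ⟨d, _, hd⟩ := ha
  have := μ.antitone (Nat.zero_le d)
  omega

end NPartition

namespace IsSymmetric

open NPartition

variable {μ : NPartition} (hsym : IsSymmetric μ)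
include hsym

theorem lt_parts_comm (i j : ℕ) : j < μ.parts i ↔ i < μ.parts j := by
  rw [← hsym j, lt_conj_iff]

theorem le_beta_iff (z i : ℕ) : (z : ℤ) ≤ μ.beta i ↔ -(z : ℤ) ≤ μ.beta (i + z) := by
  have h₁ : (z : ℤ) ≤ μ.beta i ↔ i + z < μ.parts i := by unfold beta; omega
  have h₂ : -(z : ℤ) ≤ μ.beta (i + z) ↔ i < μ.parts (i + z) := by unfold beta; omega
  rw [h₁, h₂, hsym.lt_parts_comm]

theorem neg_sub_one_notMem_betaSet {z : ℕ} (hz : (z : ℤ) ∈ μ.betaSet) :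
    -1 - (z : ℤ) ∉ μ.betaSet := by
  obtain ⟨i, hi⟩ := hz
  rintro ⟨j, hj⟩
  have hlo : -(z : ℤ) ≤ μ.beta (i + z) := (hsym.le_beta_iff z i).mp hi.ge
  have hhi : ¬ -((z + 1 : ℕ) : ℤ) ≤ μ.beta (i + (z + 1)) :=
    fun h => by have := (hsym.le_beta_iff (z + 1) i).mpr h; push_cast at this; omega
  have hij : i + z < j := lt_of_not_ge fun h => by have := μ.beta_antitone h; omega
  have := μ.beta_antitone (show i + (z + 1) ≤ j by omega)
  push_cast at hhi
  omega

theorem mem_betaSet_or_mem_betaSet (z : ℕ) :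
    (z : ℤ) ∈ μ.betaSet ∨ -1 - (z : ℤ) ∈ μ.betaSet := by
  -- for the least `m` with `β_m ≤ z`, symmetry forces `β_{m+z} = -1 - z`
  by_contra! hcon
  obtain ⟨hz, hz'⟩ := hcon
  have hex := μ.exists_beta_le z
  set m := Nat.find hex
  have hm : μ.beta m < z := lt_of_le_of_ne (Nat.find_spec hex) fun h => hz ⟨m, h⟩
  have hup : μ.beta (m + z) ≤ -1 - z := by
    have := mt (hsym.le_beta_iff z m).mpr (not_le.mpr hm)
    omega
  have hlo : -1 - (z : ℤ) ≤ μ.beta (m + z) := by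
    rcases Nat.eq_zero_or_pos m with hm0 | hmpos
    · have := μ.neg_sub_one_le_beta z
      rw [hm0, zero_add]
      omega
    · have hmin : z < μ.beta (m - 1) := not_le.mp (Nat.find_min hex (by omega))
      have := (hsym.le_beta_iff (z + 1) (m - 1)).mp (by push_cast; omega)
      rw [show m - 1 + (z + 1) = m + z by omega] at this
      push_cast at this
      omega
  exact hz' ⟨m + z, le_antisymm hup hlo⟩

theorem mem_betaSet_iff_neg_sub_one_notMem (z : ℤ) :
    z ∈ μ.betaSet ↔ -1 - z ∉ μ.betaSet := by
  rcases le_or_gt 0 z with hz | hz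
  · lift z to ℕ using hz
    exact ⟨hsym.neg_sub_one_notMem_betaSet,
      (hsym.mem_betaSet_or_mem_betaSet z).resolve_right⟩
  · obtain ⟨n, hn⟩ : ∃ n : ℕ, -1 - z = n := ⟨(-1 - z).toNat, by omega⟩
    have hz : z = -1 - (n : ℤ) := by omega
    rw [hn, hz]
    exact ⟨fun h h' => hsym.neg_sub_one_notMem_betaSet h' h,
      fun h => (hsym.mem_betaSet_or_mem_betaSet n).resolve_left h⟩

theorem sub_mem_betaSet_of_isPCore {p : ℕ} (hcore : IsPCore p μ) {x : ℤ} (hx : x ∈ μ.betaSet) :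
    x - p ∈ μ.betaSet := by
  by_contra hxp
  obtain ⟨i, hi⟩ := hx
  obtain ⟨j, hj⟩ : -1 - (x - p) ∈ μ.betaSet := by
    by_contra h
    exact hxp ((hsym.mem_betaSet_iff_neg_sub_one_notMem _).mpr h)
  unfold beta at hi hj
  -- otherwise `(i, j)` is outside the diagram and `β_i + β_j ≤ -2`
  have hji : j < μ.parts i := by
    by_contra! hij
    have : μ.parts j ≤ i := not_lt.mp fun h => hij.not_gt ((hsym.lt_parts_comm j i).mp h)
    omega
  have := hcore i j hji
  rw [hsym j] at this
  omega

theorem sub_mem_diagArms_of_isPCore {p : ℕ} (hcore : IsPCore p μ) {a : ℕ}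
    (ha : a ∈ diagArms μ) (hpa : p ≤ a) : a - p ∈ diagArms μ := by
  rw [mem_diagArms_iff] at ha ⊢
  push_cast [hpa]
  exact hsym.sub_mem_betaSet_of_isPCore hcore ha

end IsSymmetric

theorem stmt17_general (p : ℕ) (γ : ℕ) (hγ : γ < p)
    (μ : NPartition) (hsym : IsSymmetric μ) (hcore : IsPCore p μ)
    (h : ∃ a ∈ diagArms μ, a % p = γ) :
    GammaPacked p γ μ :=
  Nat.exists_residue_eq_progression_of_sub_mem hγ
    ⟨μ.parts 0, fun _ ha => (μ.lt_parts_zero_of_mem_diagArms ha).le⟩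
    (fun _ ha hpa => hsym.sub_mem_diagArms_of_isPCore hcore ha hpa) h

/-- a symmetric `p`-core with a diagonal hook of arm length
`≡ γ (mod p)` is `γ`-packed. -/
theorem stmt17 (p : ℕ) (hp : p.Prime) (γ : ℕ) (hγ : γ < p)
    (μ : NPartition) (hsym : IsSymmetric μ) (hcore : IsPCore p μ)
    (h : ∃ a ∈ diagArms μ, a % p = γ) :
    GammaPacked p γ μ :=
  stmt17_general p γ hγ μ hsym hcore h
end
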